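/- arXiv:2008.07979 — 2 statements merged into one kernel-verified Lean document; each statement's English description precedes it below -/
import Mathlib

section
/- Let μ ≥ 0 and let f : E → ℝ satisfy the μ-strong-convexity lower bound with gradient map g. Let α : ℕ → ℝ with α_k ∈ (0,1) for all k, let y : ℕ → E, and let ψ_k : E → ℝ satisfy ψ_k(x) ≥ 0 for all k and x, with ψ_0 ≡ 0. Let Ψ : ℕ → ℝ satisfy ψ_m(x) ≤ Ψ_k for all m ≤ k and all x ∈ E. Define λ_0 = 1, λ_{k+1} = (1 − α_k)·λ_k, let Φ_0 : E → ℝ be arbitrary, and define recursively Φ_{k+1}(x) = (1 − α_k)·(Φ_k(x) + ψ_k(x)) − ψ_{k+1}(x) − Ψ_k + α_k·ψ_k(x) + α_k·( f(y_k) + ⟪g(y_k), x − y_k⟫ + (μ/2)·‖x − y_k‖² ). Then for every k ≥ 0 and every x ∈ E, the generalized estimating-sequence inequality holds: Φ_k(x) ≤ λ_k·Φ_0(x) + (1 − λ_k)·(f(x) − ψ_k(x)). (Lemma 2 of the paper.) -/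
/-!
Write `D_k(x) = λ_k Φ_0(x) + (1 - λ_k)(f(x) - ψ_k(x)) - Φ_k(x)` for the gap in the inequality.
The recursion for `Φ` is built so that `D_{k+1} = (1 - α_k) D_k + α_k (f - q_k) + (Ψ_k - ψ_k)
+ (1 - α_k)(1 - λ_k) ψ_k + (1 - α_k) λ_k ψ_{k+1}`, where `q_k` is the quadratic lower model of `f`
at `y_k`. Every term is nonnegative once `λ_k ∈ [0, 1]`, so `D_k ≥ 0` by induction from `D_0 = 0`.
-/

open RealInnerProductSpace Set

lemma mem_Icc_of_succ_eq_one_sub_mul {α lam : ℕ → ℝ} (hα : ∀ k, α k ∈ Icc (0 : ℝ) 1)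
    (hlam0 : lam 0 = 1) (hlam : ∀ k, lam (k + 1) = (1 - α k) * lam k) :
    ∀ k, lam k ∈ Icc (0 : ℝ) 1 := by
  intro k
  induction k with
  | zero => simp [hlam0]
  | succ k ih =>
    obtain ⟨hα0, hα1⟩ := hα k
    rw [hlam k]
    exact ⟨mul_nonneg (by linarith) ih.1, mul_le_one₀ (by linarith) ih.1 ih.2⟩

lemma estimatingSequence_step {a l φ φ₀ F q p p' P : ℝ} (ha : a ∈ Icc (0 : ℝ) 1)
    (hl : l ∈ Icc (0 : ℝ) 1) (hq : q ≤ F) (hp : 0 ≤ p) (hp' : 0 ≤ p') (hpP : p ≤ P)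
    (hφ : φ ≤ l * φ₀ + (1 - l) * (F - p)) :
    (1 - a) * (φ + p) - p' - P + a * p + a * q ≤ (1 - a) * l * φ₀ + (1 - (1 - a) * l) * (F - p') := by
  obtain ⟨ha0, ha1⟩ := ha
  obtain ⟨hl0, hl1⟩ := hl
  have gap_eq : (1 - a) * l * φ₀ + (1 - (1 - a) * l) * (F - p')
      - ((1 - a) * (φ + p) - p' - P + a * p + a * q)
      = (1 - a) * (l * φ₀ + (1 - l) * (F - p) - φ) + a * (F - q) + (P - p)
        + (1 - a) * (1 - l) * p + (1 - a) * l * p' := by ring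
  have gap_nonneg : 0 ≤ (1 - a) * (l * φ₀ + (1 - l) * (F - p) - φ) + a * (F - q) + (P - p)
      + (1 - a) * (1 - l) * p + (1 - a) * l * p' := by
    have h1a : 0 ≤ 1 - a := by linarith
    have h1l : 0 ≤ 1 - l := by linarith
    have := mul_nonneg h1a (sub_nonneg.2 hφ)
    have := mul_nonneg ha0 (sub_nonneg.2 hq)
    have := mul_nonneg (mul_nonneg h1a h1l) hp
    have := mul_nonneg (mul_nonneg h1a hl0) hp'
    linarith
  linarith

theorem estimatingSequence_le {X : Type*} {f : X → ℝ} {q : ℕ → X → ℝ} {α : ℕ → ℝ}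
    {ψ : ℕ → X → ℝ} {Ψ : ℕ → ℝ} {lam : ℕ → ℝ} {Φ : ℕ → X → ℝ}
    (hq : ∀ k x, q k x ≤ f x) (hα : ∀ k, α k ∈ Icc (0 : ℝ) 1)
    (hψ : ∀ k x, 0 ≤ ψ k x) (hΨ : ∀ k x, ψ k x ≤ Ψ k)
    (hlam0 : lam 0 = 1) (hlam : ∀ k, lam (k + 1) = (1 - α k) * lam k)
    (hΦ : ∀ k x, Φ (k + 1) x =
      (1 - α k) * (Φ k x + ψ k x) - ψ (k + 1) x - Ψ k + α k * ψ k x + α k * q k x) :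
    ∀ k x, Φ k x ≤ lam k * Φ 0 x + (1 - lam k) * (f x - ψ k x) := by
  intro k
  induction k with
  | zero => simp [hlam0]
  | succ k ih =>
    intro x
    rw [hΦ, hlam]
    exact estimatingSequence_step (hα k) (mem_Icc_of_succ_eq_one_sub_mul hα hlam0 hlam k)
      (hq k x) (hψ k x) (hψ (k + 1) x) (hΨ k x) (ih x)

theorem stmt_1_general {n : ℕ} (μ : ℝ)
    (f : EuclideanSpace ℝ (Fin n) → ℝ) (g : EuclideanSpace ℝ (Fin n) → EuclideanSpace ℝ (Fin n))
    (hf : ∀ x y, f x ≥ f y + ⟪g y, x - y⟫ + μ / 2 * ‖x - y‖ ^ 2)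
    (α : ℕ → ℝ) (hα : ∀ k, α k ∈ Set.Ioo (0 : ℝ) 1)
    (y : ℕ → EuclideanSpace ℝ (Fin n))
    (ψ : ℕ → EuclideanSpace ℝ (Fin n) → ℝ)
    (hψ : ∀ k x, 0 ≤ ψ k x)
    (Ψ : ℕ → ℝ) (hΨ : ∀ m k, m ≤ k → ∀ x, ψ m x ≤ Ψ k)
    (lam : ℕ → ℝ) (hlam0 : lam 0 = 1) (hlam : ∀ k, lam (k + 1) = (1 - α k) * lam k)
    (Φ : ℕ → EuclideanSpace ℝ (Fin n) → ℝ)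
    (hΦ : ∀ k x, Φ (k + 1) x =
      (1 - α k) * (Φ k x + ψ k x) - ψ (k + 1) x - Ψ k + α k * ψ k x
        + α k * (f (y k) + ⟪g (y k), x - y k⟫ + μ / 2 * ‖x - y k‖ ^ 2)) :
    ∀ k x, Φ k x ≤ lam k * Φ 0 x + (1 - lam k) * (f x - ψ k x) :=
  estimatingSequence_le (q := fun k x => f (y k) + ⟪g (y k), x - y k⟫ + μ / 2 * ‖x - y k‖ ^ 2)
    (fun k x => hf x (y k)) (fun k => Ioo_subset_Icc_self (hα k)) hψ
    (fun k => hΨ k k le_rfl) hlam0 hlam hΦ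

theorem stmt_1 {n : ℕ} (hn : 1 ≤ n) (μ : ℝ) (hμ : 0 ≤ μ)
    (f : EuclideanSpace ℝ (Fin n) → ℝ) (g : EuclideanSpace ℝ (Fin n) → EuclideanSpace ℝ (Fin n))
    (hf : ∀ x y, f x ≥ f y + ⟪g y, x - y⟫ + μ / 2 * ‖x - y‖ ^ 2)
    (α : ℕ → ℝ) (hα : ∀ k, α k ∈ Set.Ioo (0 : ℝ) 1)
    (y : ℕ → EuclideanSpace ℝ (Fin n))
    (ψ : ℕ → EuclideanSpace ℝ (Fin n) → ℝ)
    (hψ : ∀ k x, 0 ≤ ψ k x) (hψ0 : ∀ x, ψ 0 x = 0)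
    (Ψ : ℕ → ℝ) (hΨ : ∀ m k, m ≤ k → ∀ x, ψ m x ≤ Ψ k)
    (lam : ℕ → ℝ) (hlam0 : lam 0 = 1) (hlam : ∀ k, lam (k + 1) = (1 - α k) * lam k)
    (Φ : ℕ → EuclideanSpace ℝ (Fin n) → ℝ)
    (hΦ : ∀ k x, Φ (k + 1) x =
      (1 - α k) * (Φ k x + ψ k x) - ψ (k + 1) x - Ψ k + α k * ψ k x
        + α k * (f (y k) + ⟪g (y k), x - y k⟫ + μ / 2 * ‖x - y k‖ ^ 2)) :
    ∀ k x, Φ k x ≤ lam k * Φ 0 x + (1 - lam k) * (f x - ψ k x) :=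
  stmt_1_general μ f g hf α hα y ψ hψ Ψ hΨ lam hlam0 hlam Φ hΦ
end

section
/- Let μ > 0, L > 0, S ≥ 0, and let f : E → ℝ satisfy the L-smoothness upper bound with gradient map g. Let x* ∈ E be a global minimizer of f with g(x*) = 0, and let x_0, x_k ∈ E, λ_k ∈ [0,1], and ψ_k : E → ℝ. Write D = e^{t} − e^{−t} with t = ((k+1)/2)·√((μ + S)/L). Assume (i) λ_k ≤ 2·μ/(L·D²) and (ii) f(x_k) − f(x*) ≤ λ_k·( f(x_0) − f(x*) ) − (1 − λ_k)·ψ_k(x*). Then f(x_k) − f(x*) ≤ μ·‖x_0 − x*‖² / D² − (1 − λ_k)·ψ_k(x*). (Theorem 2 of the paper, inequality (33), with S = ∑_{i=1}^{k−1} β_{i,k}·γ_i.) -/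
open RealInnerProductSpace

theorem sub_le_of_smooth_of_gradient_eq_zero {E : Type*} [NormedAddCommGroup E]
    [InnerProductSpace ℝ E] {L : ℝ} {f : E → ℝ} {g : E → E} {x y : E}
    (hf : f x ≤ f y + ⟪g y, x - y⟫ + L / 2 * ‖x - y‖ ^ 2) (hgrad : g y = 0) :
    f x - f y ≤ L / 2 * ‖x - y‖ ^ 2 := by
  rw [hgrad, inner_zero_left] at hf
  linarith

theorem stmt_14_general {n : ℕ} (μ L : ℝ) (hL : 0 < L)
    (f : EuclideanSpace ℝ (Fin n) → ℝ) (g : EuclideanSpace ℝ (Fin n) → EuclideanSpace ℝ (Fin n))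
    (hf : ∀ x y, f x ≤ f y + ⟪g y, x - y⟫ + L / 2 * ‖x - y‖ ^ 2)
    (xstar : EuclideanSpace ℝ (Fin n)) (hgrad : g xstar = 0)
    (x0 xk : EuclideanSpace ℝ (Fin n)) (lamk : ℝ) (hlamk : lamk ∈ Set.Icc (0 : ℝ) 1)
    (ψk : EuclideanSpace ℝ (Fin n) → ℝ)
    (D : ℝ)
    (h1 : lamk ≤ 2 * μ / (L * D ^ 2))
    (h2 : f xk - f xstar ≤ lamk * (f x0 - f xstar) - (1 - lamk) * ψk xstar) :
    f xk - f xstar ≤ μ * ‖x0 - xstar‖ ^ 2 / D ^ 2 - (1 - lamk) * ψk xstar := by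
  have hgap := sub_le_of_smooth_of_gradient_eq_zero (hf x0 xstar) hgrad
  have key : lamk * (f x0 - f xstar) ≤ μ * ‖x0 - xstar‖ ^ 2 / D ^ 2 :=
    calc lamk * (f x0 - f xstar)
        ≤ lamk * (L / 2 * ‖x0 - xstar‖ ^ 2) := mul_le_mul_of_nonneg_left hgap hlamk.1
      _ ≤ 2 * μ / (L * D ^ 2) * (L / 2 * ‖x0 - xstar‖ ^ 2) :=
        mul_le_mul_of_nonneg_right h1 (by positivity)
      _ = μ * ‖x0 - xstar‖ ^ 2 / D ^ 2 := by field_simp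
  linarith

theorem stmt_14 {n : ℕ} (hn : 1 ≤ n) (μ L S : ℝ) (hμ : 0 < μ) (hL : 0 < L) (hS : 0 ≤ S)
    (f : EuclideanSpace ℝ (Fin n) → ℝ) (g : EuclideanSpace ℝ (Fin n) → EuclideanSpace ℝ (Fin n))
    (hf : ∀ x y, f x ≤ f y + ⟪g y, x - y⟫ + L / 2 * ‖x - y‖ ^ 2)
    (xstar : EuclideanSpace ℝ (Fin n)) (hmin : ∀ x, f xstar ≤ f x) (hgrad : g xstar = 0)
    (x0 xk : EuclideanSpace ℝ (Fin n)) (lamk : ℝ) (hlamk : lamk ∈ Set.Icc (0 : ℝ) 1)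
    (ψk : EuclideanSpace ℝ (Fin n) → ℝ) (k : ℕ)
    (t D : ℝ) (ht : t = ((k : ℝ) + 1) / 2 * Real.sqrt ((μ + S) / L))
    (hD : D = Real.exp t - Real.exp (-t))
    (h1 : lamk ≤ 2 * μ / (L * D ^ 2))
    (h2 : f xk - f xstar ≤ lamk * (f x0 - f xstar) - (1 - lamk) * ψk xstar) :
    f xk - f xstar ≤ μ * ‖x0 - xstar‖ ^ 2 / D ^ 2 - (1 - lamk) * ψk xstar :=
  stmt_14_general μ L hL f g hf xstar hgrad x0 xk lamk hlamk ψk D h1 h2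
end
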